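/- arXiv:1905.01989 — 6 statements merged into one kernel-verified Lean document; each statement's English description precedes it below -/
import Mathlib

section
/- Let p1, p2 be real numbers with 0 < p1 < 1, 0 < p2 < 1 and p1 + p2 = 1, let k be a natural number, and let c1, c2 be natural numbers satisfying c1 + c2 = k and ⌊p_i·k⌋ ≤ c_i ≤ ⌈p_i·k⌉ for i = 1, 2. Then it is impossible that both c1 < ⌊p1·(k+1)⌋ and c2 < ⌊p2·(k+1)⌋; i.e., at most one of the two attribute values can be below its minimum representation requirement at position k+1. (This is the induction step establishing feasibility of the DetGreedy, DetCons, and DetRelaxed algorithms for a protected attribute with 2 possible values, Theorem 1, Case |A| = 2.) -/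
/-- Theorem 1, case |A| = 2 (induction step): if counts `c1, c2` at position `k`
satisfy the floor/ceiling representation constraints for proportions `p1, p2`
with `p1 + p2 = 1`, then at most one of the two attribute values can be below
its minimum representation requirement `⌊pᵢ·(k+1)⌋` at position `k+1`. -/
theorem detGreedy_feasible_two_attributes
    (p1 p2 : ℝ) (hp1 : 0 < p1) (hp1' : p1 < 1) (hp2 : 0 < p2) (hp2' : p2 < 1)
    (hsum : p1 + p2 = 1) (k : ℕ) (c1 c2 : ℕ) (hck : c1 + c2 = k)
    (h1lo : ⌊p1 * (k : ℝ)⌋ ≤ (c1 : ℤ)) (h1hi : (c1 : ℤ) ≤ ⌈p1 * (k : ℝ)⌉)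
    (h2lo : ⌊p2 * (k : ℝ)⌋ ≤ (c2 : ℤ)) (h2hi : (c2 : ℤ) ≤ ⌈p2 * (k : ℝ)⌉) :
    ¬ ((c1 : ℤ) < ⌊p1 * ((k : ℝ) + 1)⌋ ∧ (c2 : ℤ) < ⌊p2 * ((k : ℝ) + 1)⌋) := by
  rintro ⟨h1, h2⟩
  have hsumint : (c1 : ℤ) + c2 + 2 ≤ ⌊p1 * ((k : ℝ) + 1)⌋ + ⌊p2 * ((k : ℝ) + 1)⌋ := by omega
  have hr : ((c1 : ℤ) + c2 + 2 : ℝ) ≤ (⌊p1 * ((k : ℝ) + 1)⌋ + ⌊p2 * ((k : ℝ) + 1)⌋ : ℤ) := by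
    exact_mod_cast hsumint
  have f1 := Int.floor_le (p1 * ((k : ℝ) + 1))
  have f2 := Int.floor_le (p2 * ((k : ℝ) + 1))
  have hkc : ((c1 : ℝ) + c2) = k := by exact_mod_cast hck
  push_cast at hr
  nlinarith
end

section
/- Let p1, p2, p3 be real numbers with 0 < p_i < 1 for each i and p1 + p2 + p3 = 1, let k be a natural number, and let c1, c2, c3 be natural numbers satisfying c1 + c2 + c3 = k and ⌊p_i·k⌋ ≤ c_i ≤ ⌈p_i·k⌉ for each i. Then at most one index i ∈ {1,2,3} satisfies c_i < ⌊p_i·(k+1)⌋. (This is the induction step establishing feasibility of the DetGreedy, DetCons, and DetRelaxed algorithms for a protected attribute with 3 possible values, Theorem 1, Case |A| = 3.) -/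
lemma detGreedy_aux {pa pb pc : ℝ} (hpc : 0 < pc) (hsum : pa + pb + pc = 1)
    {k ca cb cc : ℕ} (hck : ca + cb + cc = k)
    (hA : (ca : ℤ) < ⌊pa * ((k : ℝ) + 1)⌋)
    (hB : (cb : ℤ) < ⌊pb * ((k : ℝ) + 1)⌋)
    (hC : (cc : ℤ) ≤ ⌈pc * (k : ℝ)⌉) : False := by
  have h1 : ((ca : ℤ) + 1 : ℝ) ≤ pa * ((k : ℝ) + 1) :=
    by exact_mod_cast Int.le_floor.mp (Int.add_one_le_iff.mpr hA)
  have h2 : ((cb : ℤ) + 1 : ℝ) ≤ pb * ((k : ℝ) + 1) :=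
    by exact_mod_cast Int.le_floor.mp (Int.add_one_le_iff.mpr hB)
  have h3 : ((cc : ℤ) : ℝ) ≤ pc * (k : ℝ) + 1 := by
    have hcl := Int.ceil_lt_add_one (pc * (k : ℝ))
    have : ((cc : ℤ) : ℝ) ≤ (⌈pc * (k : ℝ)⌉ : ℝ) := by exact_mod_cast hC
    linarith
  have hk : ((ca : ℝ) + cb + cc) = (k : ℝ) := by exact_mod_cast hck
  push_cast at h1 h2 h3
  nlinarith [h1, h2, h3, hk, hsum, hpc]

/-- Theorem 1, case |A| = 3 (induction step): if counts `c i` at position `k`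
satisfy the floor/ceiling representation constraints for proportions `p i`
summing to 1, then at most one of the three attribute values can be below its
minimum representation requirement `⌊pᵢ·(k+1)⌋` at position `k+1`. -/
theorem detGreedy_feasible_three_attributes
    (p : Fin 3 → ℝ) (hp : ∀ i, 0 < p i ∧ p i < 1) (hsum : ∑ i, p i = 1)
    (k : ℕ) (c : Fin 3 → ℕ) (hck : ∑ i, c i = k)
    (hlo : ∀ i, ⌊p i * (k : ℝ)⌋ ≤ (c i : ℤ))
    (hhi : ∀ i, (c i : ℤ) ≤ ⌈p i * (k : ℝ)⌉) :
    ∀ i j : Fin 3, (c i : ℤ) < ⌊p i * ((k : ℝ) + 1)⌋ →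
      (c j : ℤ) < ⌊p j * ((k : ℝ) + 1)⌋ → i = j := by
  have hs : p 0 + p 1 + p 2 = 1 := by simpa [Fin.sum_univ_three] using hsum
  have hc : c 0 + c 1 + c 2 = k := by simpa [Fin.sum_univ_three] using hck
  intro i j hi hj
  by_contra hne
  fin_cases i <;> fin_cases j <;> simp_all
  · exact detGreedy_aux (hp 2).1 hs hc hi hj (hhi 2)
  · exact detGreedy_aux (hp 1).1 (by linarith) (by omega) hi hj (hhi 1)
  · exact detGreedy_aux (hp 2).1 (by linarith) (by omega) hj hi (hhi 2)
  · exact detGreedy_aux (hp 0).1 (by linarith) (by omega) hi hj (hhi 0)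
  · exact detGreedy_aux (hp 1).1 (by linarith) (by omega) hj hi (hhi 1)
  · exact detGreedy_aux (hp 0).1 (by linarith) (by omega) hj hi (hhi 0)
end

section
/- Let n ≤ 3 and let p : Fin n → ℝ satisfy 0 < p_i < 1 for each i and ∑_i p_i = 1. Then for every natural number N there exists an assignment f : Fin N → Fin n of attribute values to ranking positions such that for every k ≤ N and every attribute value i, the count c_k(i) = |{ j < k : f(j) = i }| satisfies ⌊p_i·k⌋ ≤ c_k(i) ≤ ⌈p_i·k⌉. (Consequence of Theorem 1: for a protected attribute with at most 3 possible values, a ranking satisfying both the minimum and maximum representation requirements at every prefix always exists, and is produced by the DetGreedy, DetCons and DetRelaxed algorithms.) -/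
open Finset

/-- Key greedy step: if prefix counts satisfy the bounds at prefix `k`, then some
attribute can be incremented keeping the bounds at prefix `k+1`. -/
lemma greedy_step (n : ℕ) (hn : n ≤ 3) (p : Fin n → ℝ)
    (hp : ∀ i, 0 < p i ∧ p i < 1) (hsum : ∑ i, p i = 1)
    (k : ℕ) (c : Fin n → ℕ) (hc : ∑ i, (c i : ℝ) = k)
    (hb : ∀ i, ⌊p i * (k : ℝ)⌋ ≤ (c i : ℤ) ∧ (c i : ℤ) ≤ ⌈p i * (k : ℝ)⌉) :
    ∃ i, ∀ j, ⌊p j * ((k : ℝ) + 1)⌋ ≤ ((c j : ℤ) + if j = i then 1 else 0) ∧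
      ((c j : ℤ) + if j = i then 1 else 0) ≤ ⌈p j * ((k : ℝ) + 1)⌉ := by
  have hfl : ∀ j, ⌊p j * ((k : ℝ) + 1)⌋ ≤ ⌊p j * (k : ℝ)⌋ + 1 := by
    intro j
    have h1 : p j * ((k : ℝ) + 1) < ((⌊p j * (k : ℝ)⌋ + 2 : ℤ) : ℝ) := by
      have := Int.lt_floor_add_one (p j * (k : ℝ))
      have := (hp j).2
      push_cast
      nlinarith
    have := Int.floor_lt.mpr h1
    omega
  have hcl : ∀ j, ⌈p j * (k : ℝ)⌉ ≤ ⌈p j * ((k : ℝ) + 1)⌉ := by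
    intro j
    apply Int.ceil_le_ceil
    nlinarith [(hp j).1]
  have hxlt : ∀ l, (c l : ℝ) - p l * ((k : ℝ) + 1) < 1 := by
    intro l
    have h1 : (c l : ℝ) ≤ ((⌈p l * (k : ℝ)⌉ : ℤ) : ℝ) := by exact_mod_cast (hb l).2
    have h2 : ⌈p l * (k : ℝ)⌉ ≤ ⌊p l * (k : ℝ)⌋ + 1 := Int.ceil_le_floor_add_one _
    have h3 : ((⌊p l * (k : ℝ)⌋ : ℤ) : ℝ) ≤ p l * (k : ℝ) := Int.floor_le _
    have h4 : (0 : ℝ) < p l := (hp l).1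
    have h2' : ((⌈p l * (k : ℝ)⌉ : ℤ) : ℝ) ≤ ((⌊p l * (k : ℝ)⌋ : ℤ) : ℝ) + 1 := by
      exact_mod_cast h2
    nlinarith
  have hsum' : ∑ l, p l * ((k : ℝ) + 1) = (k : ℝ) + 1 := by
    rw [← Finset.sum_mul, hsum, one_mul]
  by_cases hS : ∃ i, (c i : ℤ) < ⌊p i * ((k : ℝ) + 1)⌋
  · obtain ⟨i, hi⟩ := hS
    refine ⟨i, fun j => ?_⟩
    by_cases hj : j = i
    · subst hj
      simp only [if_pos rfl, if_true, eq_self_iff_true]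
      constructor
      · have h1 := (hb j).1
        have h2 := hfl j
        omega
      · have h3 := Int.floor_le_ceil (p j * ((k : ℝ) + 1))
        omega
    · simp only [if_neg hj, add_zero]
      refine ⟨?_, le_trans (hb j).2 (hcl j)⟩
      by_contra hj2
      push_neg at hj2
      -- two indices i ≠ j both below their new floors: contradiction
      have Ai : (c i : ℝ) - p i * ((k : ℝ) + 1) ≤ -1 := by
        have h1 : ((c i : ℤ) : ℝ) ≤ ((⌊p i * ((k : ℝ) + 1)⌋ - 1 : ℤ) : ℝ) := by
          exact_mod_cast (by omega : (c i : ℤ) ≤ ⌊p i * ((k : ℝ) + 1)⌋ - 1)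
        have h2 : ((⌊p i * ((k : ℝ) + 1)⌋ : ℤ) : ℝ) ≤ p i * ((k : ℝ) + 1) := Int.floor_le _
        push_cast at h1
        linarith
      have Aj : (c j : ℝ) - p j * ((k : ℝ) + 1) ≤ -1 := by
        have h1 : ((c j : ℤ) : ℝ) ≤ ((⌊p j * ((k : ℝ) + 1)⌋ - 1 : ℤ) : ℝ) := by
          exact_mod_cast (by omega : (c j : ℤ) ≤ ⌊p j * ((k : ℝ) + 1)⌋ - 1)
        have h2 : ((⌊p j * ((k : ℝ) + 1)⌋ : ℤ) : ℝ) ≤ p j * ((k : ℝ) + 1) := Int.floor_le _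
        push_cast at h1
        linarith
      set x : Fin n → ℝ := fun l => (c l : ℝ) - p l * ((k : ℝ) + 1) with hx
      have hxsum : ∑ l, x l = -1 := by
        simp only [hx]
        rw [Finset.sum_sub_distrib, hc, hsum']
        ring
      have hij : ({j, i} : Finset (Fin n)) ⊆ univ := subset_univ _
      have hsplit : ∑ l ∈ univ \ {j, i}, x l + ∑ l ∈ ({j, i} : Finset (Fin n)), x l
          = ∑ l, x l := Finset.sum_sdiff hij
      have hpair : ∑ l ∈ ({j, i} : Finset (Fin n)), x l = x j + x i :=
        Finset.sum_pair hj
      have hcard : (univ \ ({j, i} : Finset (Fin n))).card ≤ 1 := by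
        rw [Finset.card_sdiff_of_subset hij, Finset.card_pair hj]
        simp only [Finset.card_univ, Fintype.card_fin]
        omega
      have hrest : ∑ l ∈ univ \ ({j, i} : Finset (Fin n)), x l < 1 := by
        rcases Nat.lt_or_ge (univ \ ({j, i} : Finset (Fin n))).card 1 with h | h
        · have : (univ \ ({j, i} : Finset (Fin n))) = ∅ := by
            rw [← Finset.card_eq_zero]; omega
          rw [this, Finset.sum_empty]; norm_num
        · have h1 : (univ \ ({j, i} : Finset (Fin n))).card = 1 := le_antisymm hcard h
          obtain ⟨a, ha⟩ := Finset.card_eq_one.mp h1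
          rw [ha, Finset.sum_singleton]
          exact hxlt a
      rw [hpair] at hsplit
      simp only [hx] at hsplit hrest
      linarith [hxsum, hsplit, hrest, Ai, Aj]
  · push_neg at hS
    have hT : ∃ i, (c i : ℤ) < ⌈p i * ((k : ℝ) + 1)⌉ := by
      by_contra hT
      push_neg at hT
      have : ∀ l, p l * ((k : ℝ) + 1) ≤ (c l : ℝ) := by
        intro l
        have h1 := Int.le_ceil (p l * ((k : ℝ) + 1))
        have h2 : ((⌈p l * ((k : ℝ) + 1)⌉ : ℤ) : ℝ) ≤ (c l : ℝ) := by
          exact_mod_cast hT l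
        linarith
      have : ∑ l, p l * ((k : ℝ) + 1) ≤ ∑ l, (c l : ℝ) := Finset.sum_le_sum (fun l _ => this l)
      rw [hsum', hc] at this
      linarith
    obtain ⟨i, hi⟩ := hT
    refine ⟨i, fun j => ?_⟩
    by_cases hj : j = i
    · subst hj
      simp only [if_pos rfl, if_true, eq_self_iff_true]
      exact ⟨by have := hS j; omega, by omega⟩
    · simp only [if_neg hj, add_zero]
      exact ⟨hS j, le_trans (hb j).2 (hcl j)⟩
/-- Counting over `Fin N` positions below `k` equals counting over `range k`. -/
lemma count_eq (n : ℕ) (N : ℕ) (g : ℕ → Fin n) (k : ℕ) (hk : k ≤ N) (i : Fin n) :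
    (univ.filter (fun j : Fin N => (j : ℕ) < k ∧ g (j : ℕ) = i)).card
      = ((range k).filter (fun j => g j = i)).card := by
  refine Finset.card_bij (fun j _ => (j : ℕ)) ?_ ?_ ?_
  · intro a ha
    simp only [mem_filter, mem_univ, true_and] at ha
    simp only [mem_filter, mem_range]
    exact ⟨ha.1, ha.2⟩
  · intro a _ b _ h
    exact Fin.ext h
  · intro b hb
    simp only [mem_filter, mem_range] at hb
    exact ⟨⟨b, lt_of_lt_of_le hb.1 hk⟩, by simp [mem_filter, hb.1, hb.2], rfl⟩

lemma exists_good_seq (n : ℕ) (hn : n ≤ 3) (hn1 : 0 < n) (p : Fin n → ℝ)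
    (hp : ∀ i, 0 < p i ∧ p i < 1) (hsum : ∑ i, p i = 1) :
    ∀ N : ℕ, ∃ g : ℕ → Fin n, ∀ k ≤ N, ∀ i : Fin n,
      ⌊p i * (k : ℝ)⌋ ≤ ((((range k).filter (fun j => g j = i)).card : ℤ)) ∧
      ((((range k).filter (fun j => g j = i)).card : ℤ)) ≤ ⌈p i * (k : ℝ)⌉ := by
  intro N
  induction N with
  | zero =>
    refine ⟨fun _ => ⟨0, hn1⟩, ?_⟩
    intro k hk i
    obtain rfl : k = 0 := Nat.le_zero.mp hk
    simp
  | succ N ih =>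
    obtain ⟨g, hg⟩ := ih
    set cN : Fin n → ℕ := fun i => ((range N).filter (fun j => g j = i)).card with hcN
    have hc : ∑ i, (cN i : ℝ) = (N : ℝ) := by
      have h := Finset.card_eq_sum_card_fiberwise
        (f := g) (s := range N) (t := univ) (fun x _ => mem_univ _)
      rw [card_range] at h
      exact_mod_cast congrArg (Nat.cast : ℕ → ℝ) h.symm
    obtain ⟨i0, hi0⟩ := greedy_step n hn p hp hsum N cN hc (fun i => hg N le_rfl i)
    refine ⟨Function.update g N i0, ?_⟩
    have hagree : ∀ k ≤ N, ∀ i : Fin n,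
        (range k).filter (fun j => Function.update g N i0 j = i)
          = (range k).filter (fun j => g j = i) := by
      intro k hk i
      apply Finset.filter_congr
      intro j hj
      rw [mem_range] at hj
      rw [Function.update_of_ne (by omega)]
    intro k hk i
    rcases Nat.lt_or_ge k (N + 1) with h | h
    · have hk' : k ≤ N := by omega
      rw [hagree k hk' i]
      exact hg k hk' i
    · have hk' : k = N + 1 := by omega
      subst hk'
      have hcount : ((range (N + 1)).filter (fun j => Function.update g N i0 j = i)).card
          = cN i + (if i = i0 then 1 else 0) := by
        rw [Finset.range_add_one, Finset.filter_insert]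
        by_cases hii : Function.update g N i0 N = i
        · rw [if_pos hii, Finset.card_insert_of_notMem (by simp), hagree N le_rfl i]
          have : i = i0 := by rw [Function.update_self] at hii; exact hii.symm
          rw [if_pos this]
        · rw [if_neg hii, hagree N le_rfl i,
            if_neg (fun he => hii (by rw [Function.update_self]; exact he.symm)), add_zero]
      rw [hcount]
      have hcast : ((N + 1 : ℕ) : ℝ) = (N : ℝ) + 1 := by push_cast; ring
      rw [hcast]
      have h1 := (hi0 i).1
      have h2 := (hi0 i).2
      constructor
      · split_ifs at h1 ⊢ with hii <;> push_cast <;> omega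
      · split_ifs at h2 ⊢ with hii <;> push_cast <;> omega

/-- Theorem 1 (feasibility for at most 3 attribute values): for `n ≤ 3`
attribute values with desired proportions `p i ∈ (0,1)` summing to 1, and any
length `N`, there is an assignment of attribute values to ranking positions
whose prefix counts satisfy both the minimum (`⌊pᵢ·k⌋`) and maximum (`⌈pᵢ·k⌉`)
representation requirements at every prefix length `k ≤ N`. -/
theorem feasible_ranking_exists_of_le_three
    (n : ℕ) (hn : n ≤ 3) (p : Fin n → ℝ)
    (hp : ∀ i, 0 < p i ∧ p i < 1) (hsum : ∑ i, p i = 1) :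
    ∀ N : ℕ, ∃ f : Fin N → Fin n, ∀ k ≤ N, ∀ i : Fin n,
      ⌊p i * (k : ℝ)⌋ ≤ (((univ.filter (fun j : Fin N => (j : ℕ) < k ∧ f j = i)).card : ℤ)) ∧
      (((univ.filter (fun j : Fin N => (j : ℕ) < k ∧ f j = i)).card : ℤ)) ≤ ⌈p i * (k : ℝ)⌉ := by
  have hn1 : 0 < n := by
    rcases Nat.eq_zero_or_pos n with h | h
    · subst h
      simp at hsum
    · exact h
  intro N
  obtain ⟨g, hg⟩ := exists_good_seq n hn hn1 p hp hsum N
  refine ⟨fun j => g (j : ℕ), ?_⟩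
  intro k hk i
  rw [count_eq n N g k hk i]
  exact hg k hk i
end

section
/- Let p : Fin 4 → ℝ be given by p = (2/5, 2/5, 1/10, 1/10), and let c : Fin 4 → ℕ be given by c = (0, 0, 1, 1). Then ∑_i p_i = 1, ∑_i c_i = 2, and ⌊p_i·2⌋ ≤ c_i ≤ ⌈p_i·2⌉ for every i (so the partial ranking with counts c at position k = 2 is feasible), yet there are two distinct indices i = 1 and i = 2 with c_i < ⌊p_i·3⌋; hence no single candidate chosen for position 3 can restore feasibility, and the counts c cannot be extended to a feasible prefix of length 3. (The counterexample of Theorem 1 showing that DetGreedy is not guaranteed to be feasible for |A| = 4.) -/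
theorem floor_le_and_le_ceil_of_mem_Ioo {x : ℝ} (hx : x ∈ Set.Ioo 0 1) {c : ℕ} (hc : c ≤ 1) :
    ⌊x⌋ ≤ (c : ℤ) ∧ (c : ℤ) ≤ ⌈x⌉ := by
  have floor_eq : ⌊x⌋ = 0 := Int.floor_eq_zero_iff.mpr ⟨hx.1.le, hx.2⟩
  have ceil_eq : ⌈x⌉ = 1 := Int.ceil_eq_iff.mpr ⟨by norm_num [hx.1], by norm_num [hx.2.le]⟩
  rw [floor_eq, ceil_eq]
  omega

/-- Theorem 1, counterexample for |A| = 4: with proportions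
`p = (0.4, 0.4, 0.1, 0.1)` and counts `c = (0, 0, 1, 1)` at position `k = 2`,
the counts are feasible (they satisfy the floor/ceiling requirements and sum
to 2), yet two distinct attribute values are simultaneously below their
minimum representation requirement at position 3, so no single candidate
chosen for position 3 can restore feasibility. -/
theorem detGreedy_infeasible_four_attributes :
    let p : Fin 4 → ℝ := ![2/5, 2/5, 1/10, 1/10]
    let c : Fin 4 → ℕ := ![0, 0, 1, 1]
    (∑ i, p i = 1) ∧ (∑ i, c i = 2) ∧
      (∀ i, ⌊p i * (2 : ℝ)⌋ ≤ (c i : ℤ) ∧ (c i : ℤ) ≤ ⌈p i * (2 : ℝ)⌉) ∧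
      (0 : Fin 4) ≠ (1 : Fin 4) ∧
      (c 0 : ℤ) < ⌊p 0 * (3 : ℝ)⌋ ∧ (c 1 : ℤ) < ⌊p 1 * (3 : ℝ)⌋ := by
  intro p c
  have floor_at_three : ⌊(2 / 5 : ℝ) * 3⌋ = 1 := by norm_num [Int.floor_eq_iff]
  refine ⟨?_, ?_, fun i ↦ floor_le_and_le_ceil_of_mem_Ioo ?_ ?_, by decide, ?_, ?_⟩
  · norm_num [p, Fin.sum_univ_four, Matrix.cons_val_two, Matrix.cons_val_three]
  · simp [c, Fin.sum_univ_four]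
  · fin_cases i <;> norm_num [p]
  · fin_cases i <;> simp [c]
  · simp [p, c, floor_at_three]
  · simp [p, c, floor_at_three]
end

section
/- For every natural number n ≥ 4 there exist p : Fin n → ℝ with p_i ≥ 0 for all i and ∑_i p_i = 1, a natural number k, and c : Fin n → ℕ with ∑_i c_i = k and ⌊p_i·k⌋ ≤ c_i ≤ ⌈p_i·k⌉ for every i, together with two distinct indices i ≠ j such that c_i < ⌊p_i·(k+1)⌋ and c_j < ⌊p_j·(k+1)⌋. (Generalization of the DetGreedy counterexample: for every number of attribute values n ≥ 4, a feasible prefix of counts can fail to be extendible by a single candidate, so greedy step-by-step ranking is not guaranteed to be feasible whenever |A| ≥ 4; part of Theorem 1.) -/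
open Finset

/-- Theorem 1, generalized counterexample: for every `n ≥ 4` attribute values
there are proportions `p` (nonnegative, summing to 1), a position `k`, and
feasible counts `c` at position `k` (satisfying the floor/ceiling
requirements and summing to `k`) such that two distinct attribute values are
simultaneously below their minimum representation requirement at position
`k + 1`; hence greedy step-by-step ranking is not guaranteed to be feasible
for `|A| ≥ 4`. -/
theorem detGreedy_infeasible_of_four_le (n : ℕ) (hn : 4 ≤ n) :
    ∃ (p : Fin n → ℝ) (k : ℕ) (c : Fin n → ℕ),
      (∀ i, 0 ≤ p i) ∧ (∑ i, p i = 1) ∧ (∑ i, c i = k) ∧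
      (∀ i, ⌊p i * (k : ℝ)⌋ ≤ (c i : ℤ) ∧ (c i : ℤ) ≤ ⌈p i * (k : ℝ)⌉) ∧
      ∃ i j : Fin n, i ≠ j ∧
        (c i : ℤ) < ⌊p i * ((k : ℝ) + 1)⌋ ∧
        (c j : ℤ) < ⌊p j * ((k : ℝ) + 1)⌋ := by
  have h0 : 0 < n := by omega
  have h1 : 1 < n := by omega
  have h2 : 2 < n := by omega
  have h3 : 3 < n := by omega
  refine ⟨fun i => (if i = ⟨0, h0⟩ then (6:ℝ)⁻¹ else 0) + (if i = ⟨1, h1⟩ then (6:ℝ)⁻¹ else 0)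
      + (if i = ⟨2, h2⟩ then (3:ℝ)⁻¹ else 0) + (if i = ⟨3, h3⟩ then (3:ℝ)⁻¹ else 0), 2,
    fun i => (if i = ⟨0, h0⟩ then 1 else 0) + (if i = ⟨1, h1⟩ then 1 else 0), ?_, ?_, ?_, ?_, ?_⟩
  · intro i; beta_reduce; split_ifs <;> norm_num
  · simp only [Finset.sum_add_distrib, Finset.sum_ite_eq' Finset.univ, Finset.mem_univ, if_true]
    norm_num
  · simp only [Finset.sum_add_distrib, Finset.sum_ite_eq' Finset.univ, Finset.mem_univ, if_true]
  · intro i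
    beta_reduce
    by_cases e0 : i = ⟨0, h0⟩
    · subst e0; norm_num [Fin.ext_iff]
    · by_cases e1 : i = ⟨1, h1⟩
      · subst e1; norm_num [Fin.ext_iff]
      · by_cases e2 : i = ⟨2, h2⟩
        · subst e2; norm_num [Fin.ext_iff]
        · by_cases e3 : i = ⟨3, h3⟩
          · subst e3; norm_num [Fin.ext_iff]
          · simp only [if_neg e0, if_neg e1, if_neg e2, if_neg e3]; norm_num
  · refine ⟨⟨2, h2⟩, ⟨3, h3⟩, by simp [Fin.ext_iff], ?_, ?_⟩ <;> norm_num [Fin.ext_iff]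
end

section
/- Let A be a finite nonempty index set and let p : A → ℝ satisfy p_a ≥ 0 for all a and ∑_{a ∈ A} p_a = 1. Then for every natural number N there exists an assignment f : Fin N → A of attribute values to ranking positions such that for every k ≤ N and every a ∈ A, the count c_k(a) = |{ j < k : f(j) = a }| satisfies c_k(a) ≥ ⌊p_a·k⌋. (The content of Theorem 2: the DetConstSort algorithm produces, for any number of attribute values and any desired distribution, a ranking that is feasible, i.e., meets every minimum representation requirement at every prefix.) -/
open Finset

/-- The number of elements of `Fin n` with value below `d ≤ n` is `d`. -/
lemma prefix_card (n d : ℕ) (hd : d ≤ n) :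
    (univ.filter fun j : Fin n => (j : ℕ) < d).card = d := by
  have : (univ.filter fun j : Fin n => (j : ℕ) < d) =
      (Finset.range d).attachFin (fun m hm => lt_of_lt_of_le (Finset.mem_range.mp hm) hd) := by
    ext j
    simp [Finset.mem_attachFin]
  rw [this, Finset.card_attachFin, Finset.card_range]

/-- Theorem 2 (feasibility of DetConstSort): for any finite nonempty set of
attribute values with nonnegative desired proportions summing to 1, and any
length `N`, there exists an assignment of attribute values to ranking
positions whose prefix counts meet every minimum representation requirement
`⌊p_a·k⌋` at every prefix length `k ≤ N`. -/
theorem feasible_ranking_exists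
    {A : Type*} [Fintype A] [DecidableEq A] [Nonempty A] (p : A → ℝ)
    (hp : ∀ a, 0 ≤ p a) (hsum : ∑ a, p a = 1) :
    ∀ N : ℕ, ∃ f : Fin N → A, ∀ k ≤ N, ∀ a : A,
      ⌊p a * (k : ℝ)⌋ ≤
        (((univ.filter (fun j : Fin N => (j : ℕ) < k ∧ f j = a)).card : ℤ)) := by
  intro N
  classical
  -- monotonicity of the floor requirements
  have hmono : ∀ (a : A) (i j : ℕ), i ≤ j → ⌊p a * (i : ℝ)⌋ ≤ ⌊p a * (j : ℝ)⌋ := by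
    intro a i j h
    exact Int.floor_le_floor (mul_le_mul_of_nonneg_left (by exact_mod_cast h) (hp a))
  -- the sum of the floors at any prefix length `K` is at most `K`
  have hsumK : ∀ K : ℕ, (∑ a, ⌊p a * (K : ℝ)⌋) ≤ (K : ℤ) := by
    intro K
    have h1 : ((∑ a, ⌊p a * (K : ℝ)⌋ : ℤ) : ℝ) ≤ ∑ a, p a * (K : ℝ) := by
      push_cast
      exact Finset.sum_le_sum fun a _ => Int.floor_le _
    have h2 : ∑ a, p a * (K : ℝ) = (K : ℝ) := by
      rw [← Finset.sum_mul, hsum, one_mul]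
    rw [h2] at h1
    exact_mod_cast h1
  -- demands: for each attribute `a`, `⌊p a * N⌋` copies are demanded;
  -- demand `(a, m)` may be placed at positions `j` with `⌊p a * j⌋ ≤ m`.
  set t : (Σ a : A, Fin (⌊p a * (N : ℝ)⌋.toNat)) → Finset (Fin N) :=
    fun d => univ.filter fun j : Fin N => ⌊p d.1 * ((j : ℕ) : ℝ)⌋ ≤ ((d.2 : ℕ) : ℤ) with ht
  -- Hall's condition
  have hall : ∀ s : Finset (Σ a : A, Fin (⌊p a * (N : ℝ)⌋.toNat)),
      s.card ≤ (s.biUnion t).card := by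
    intro s
    set K := (s.biUnion t).card with hK
    have hKN : K ≤ N := by
      calc K ≤ (univ : Finset (Fin N)).card := Finset.card_le_univ _
      _ = N := by simp
    -- each demand in `s` has its deadline within the first `K` positions
    have key : ∀ (a : A) (m : Fin (⌊p a * (N : ℝ)⌋.toNat)), (⟨a, m⟩ : Σ a : A,
        Fin (⌊p a * (N : ℝ)⌋.toNat)) ∈ s → ((m : ℕ) : ℤ) + 1 ≤ ⌊p a * (K : ℝ)⌋ := by
      intro a m hx
      have hmN : ((m : ℕ) : ℤ) + 1 ≤ ⌊p a * (N : ℝ)⌋ :=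
        Int.add_one_le_iff.mpr (Int.lt_toNat.mp m.2)
      have hex : ∃ k : ℕ, ((m : ℕ) : ℤ) + 1 ≤ ⌊p a * (k : ℝ)⌋ := ⟨N, hmN⟩
      set dl := Nat.find hex with hdl
      have hdlN : dl ≤ N := Nat.find_le hmN
      have hts : t ⟨a, m⟩ = univ.filter fun j : Fin N => (j : ℕ) < dl := by
        ext j
        simp only [ht, mem_filter, mem_univ, true_and]
        constructor
        · intro h
          by_contra hlt
          push_neg at hlt
          have h1 : ((m : ℕ) : ℤ) + 1 ≤ ⌊p a * (dl : ℝ)⌋ := hdl ▸ Nat.find_spec hex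
          have h2 := hmono a dl (j : ℕ) hlt
          omega
        · intro hj
          have h1 : ¬ (((m : ℕ) : ℤ) + 1 ≤ ⌊p a * ((j : ℕ) : ℝ)⌋) := Nat.find_min hex hj
          omega
      have hcard : (t ⟨a, m⟩).card = dl := by rw [hts]; exact prefix_card N dl hdlN
      have hsub : t ⟨a, m⟩ ⊆ s.biUnion t := Finset.subset_biUnion_of_mem t hx
      have hdlK : dl ≤ K := by rw [← hcard, hK]; exact Finset.card_le_card hsub
      calc ((m : ℕ) : ℤ) + 1 ≤ ⌊p a * (dl : ℝ)⌋ := hdl ▸ Nat.find_spec hex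
      _ ≤ ⌊p a * (K : ℝ)⌋ := hmono a dl K hdlK
    -- count the demands with deadline within `K`
    have hsub : s ⊆ univ.sigma fun a =>
        univ.filter fun m : Fin (⌊p a * (N : ℝ)⌋.toNat) => (m : ℕ) < ⌊p a * (K : ℝ)⌋.toNat := by
      intro x hx
      rcases x with ⟨a, m⟩
      simp only [Finset.mem_sigma, mem_univ, true_and, mem_filter]
      have := key a m hx
      exact Int.lt_toNat.mpr (by omega)
    have hcount : s.card ≤ ∑ a, ⌊p a * (K : ℝ)⌋.toNat := by
      calc s.card ≤ _ := Finset.card_le_card hsub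
      _ = ∑ a, (univ.filter fun m : Fin (⌊p a * (N : ℝ)⌋.toNat) =>
            (m : ℕ) < ⌊p a * (K : ℝ)⌋.toNat).card := Finset.card_sigma _ _
      _ = ∑ a, ⌊p a * (K : ℝ)⌋.toNat := by
          refine Finset.sum_congr rfl fun a _ => ?_
          exact prefix_card _ _ (Int.toNat_le_toNat (hmono a K N hKN))
    have hfin : ((∑ a, ⌊p a * (K : ℝ)⌋.toNat : ℕ) : ℤ) ≤ (K : ℤ) := by
      have : ((∑ a, ⌊p a * (K : ℝ)⌋.toNat : ℕ) : ℤ) = ∑ a, ⌊p a * (K : ℝ)⌋ := by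
        push_cast
        refine Finset.sum_congr rfl fun a _ => ?_
        exact Int.toNat_of_nonneg (Int.floor_nonneg.mpr (mul_nonneg (hp a) (Nat.cast_nonneg _)))
      rw [this]
      exact hsumK K
    exact_mod_cast (Nat.cast_le.mpr hcount).trans hfin
  obtain ⟨g, hginj, hgmem⟩ := (Finset.all_card_le_biUnion_card_iff_exists_injective t).mp hall
  -- define the ranking from the matching
  refine ⟨fun j => if h : ∃ x, g x = j then (Classical.choose h).1 else Classical.arbitrary A,
    ?_⟩
  intro k hk a
  set f : Fin N → A :=
    fun j => if h : ∃ x, g x = j then (Classical.choose h).1 else Classical.arbitrary A with hf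
  by_cases hpos : ⌊p a * (k : ℝ)⌋ ≤ 0
  · exact hpos.trans (Int.ofNat_nonneg _)
  push_neg at hpos
  set M := ⌊p a * (k : ℝ)⌋.toNat with hM
  have hMk : (M : ℤ) = ⌊p a * (k : ℝ)⌋ := Int.toNat_of_nonneg hpos.le
  have hMN : M ≤ ⌊p a * (N : ℝ)⌋.toNat := Int.toNat_le_toNat (hmono a k N hk)
  set φ : Fin M → Fin N := fun m => g ⟨a, ⟨(m : ℕ), lt_of_lt_of_le m.2 hMN⟩⟩ with hφ
  have hmem : ∀ m : Fin M, φ m ∈ univ.filter fun j : Fin N => (j : ℕ) < k ∧ f j = a := by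
    intro m
    simp only [mem_filter, mem_univ, true_and]
    constructor
    · -- position is within the first k
      have hj := hgmem ⟨a, ⟨(m : ℕ), lt_of_lt_of_le m.2 hMN⟩⟩
      simp only [ht, mem_filter, mem_univ, true_and] at hj
      have hj' : ⌊p a * (((φ m : Fin N) : ℕ) : ℝ)⌋ ≤ ((m : ℕ) : ℤ) := hj
      by_contra hlt
      push_neg at hlt
      have h2 := hmono a k (φ m : ℕ) hlt
      have h3 : ((m : ℕ) : ℤ) < (M : ℤ) := by exact_mod_cast m.2
      rw [hMk] at h3
      omega
    · -- the chosen preimage is the demand itself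
      have hex : ∃ x, g x = φ m := ⟨⟨a, ⟨(m : ℕ), lt_of_lt_of_le m.2 hMN⟩⟩, rfl⟩
      have : Classical.choose hex = ⟨a, ⟨(m : ℕ), lt_of_lt_of_le m.2 hMN⟩⟩ :=
        hginj (Classical.choose_spec hex)
      simp only [hf]
      rw [dif_pos hex, this]
  have hinj : Set.InjOn φ (univ : Finset (Fin M)) := by
    intro m1 _ m2 _ h
    have := hginj h
    exact Fin.ext (congrArg (fun x : Σ a : A, Fin (⌊p a * (N : ℝ)⌋.toNat) => (x.2 : ℕ)) this)
  have hcard : M ≤ (univ.filter fun j : Fin N => (j : ℕ) < k ∧ f j = a).card := by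
    calc M = (univ : Finset (Fin M)).card := by simp
    _ ≤ _ := Finset.card_le_card_of_injOn φ (fun m _ => hmem m) hinj
  rw [← hMk]
  exact_mod_cast hcard
end
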